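/- Suppose C ⊆ U ⊆ ℝⁿ, where U is open and C is relatively closed in U. If the tangent cone Tan(C, x) equals all of ℝⁿ for every x ∈ C, and C is nonempty and U is connected, then C = U. -/

import Mathlib

/-- Tangent cone of a set `C` at a point `x`. -/
def tanCone {n : ℕ} (C : Set (EuclideanSpace ℝ (Fin n))) (x : EuclideanSpace ℝ (Fin n)) :
    Set (EuclideanSpace ℝ (Fin n)) :=
  {v | ∀ ε > (0 : ℝ), ∃ y ∈ C, ∃ r : ℝ, 0 < r ∧ ‖y - x‖ < ε ∧ ‖r • (y - x) - v‖ < ε}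

/-!
A relatively closed set `C` with full tangent cones is open: if some `z` close to `x ∈ C` missed
`C`, a nearest point `x₀` of `C` to `z` (which exists locally, by compactness) would make
`z - x₀` a proximal normal, and secants `r • (y - x₀)` with `y ∈ C` near `x₀` stay away from a
proximal normal, so `z - x₀ ∉ tanCone C x₀`. Being open and relatively closed in the connected
set `U`, the nonempty set `C` is all of `U`.
-/

open Set Filter Topology Metric
open scoped RealInnerProductSpace

section InnerProductSpace

variable {E : Type*} [NormedAddCommGroup E] [InnerProductSpace ℝ E]

theorem two_mul_inner_le_norm_sq_of_dist_le {x₀ y z : E} (h : dist z x₀ ≤ dist z y) :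
    2 * ⟪z - x₀, y - x₀⟫ ≤ ‖y - x₀‖ ^ 2 := by
  have hsq : ‖z - x₀‖ ^ 2 ≤ ‖(z - x₀) - (y - x₀)‖ ^ 2 := by
    rw [sub_sub_sub_cancel_right, ← dist_eq_norm, ← dist_eq_norm]
    exact pow_le_pow_left₀ dist_nonneg h 2
  rw [norm_sub_sq_real (z - x₀)] at hsq
  linarith

theorem norm_sq_sub_le_norm_smul_sub_sq {u v : E} (h : 2 * ⟪v, u⟫ ≤ ‖u‖ ^ 2) {r : ℝ}
    (hr : 0 ≤ r) : ‖v‖ ^ 2 - ‖u‖ ^ 2 / 4 ≤ ‖r • u - v‖ ^ 2 := by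
  rw [norm_sub_sq_real, real_inner_smul_left, real_inner_comm, norm_smul, Real.norm_of_nonneg hr]
  nlinarith [sq_nonneg (r * ‖u‖ - ‖u‖ / 2), mul_le_mul_of_nonneg_left h hr]

end InnerProductSpace

theorem exists_isLocalMinOn_dist_of_inter_closure_subset {α : Type*} [PseudoMetricSpace α]
    [ProperSpace α] {U C : Set α} (hU : IsOpen U) (hC : U ∩ closure C ⊆ C) {x : α}
    (hx : x ∈ C) (hxU : x ∈ U) : ∀ᶠ z in 𝓝 x, ∃ x₀ ∈ C, IsLocalMinOn (dist z) C x₀ := by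
  obtain ⟨ρ, hρ, hball⟩ := Metric.isOpen_iff.mp hU x hxU
  set K := closedBall x (ρ / 2) ∩ closure C
  have hKC : K ⊆ C := fun y hy =>
    hC ⟨hball (lt_of_le_of_lt (mem_closedBall.mp hy.1) (by linarith)), hy.2⟩
  have hxK : x ∈ K := ⟨mem_closedBall_self (by positivity), subset_closure hx⟩
  filter_upwards [ball_mem_nhds x (by positivity : 0 < ρ / 4)] with z hz
  obtain ⟨x₀, hx₀K, hmin⟩ := ((isCompact_closedBall x (ρ / 2)).inter_right isClosed_closure)
    |>.exists_isMinOn ⟨x, hxK⟩ (continuous_const.dist continuous_id).continuousOn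
  have hx₀x : dist x₀ x < ρ / 2 := calc
    dist x₀ x ≤ dist z x₀ + dist z x := dist_triangle_left _ _ _
    _ ≤ dist z x + dist z x := by gcongr; exact hmin hxK
    _ < ρ / 2 := by rw [mem_ball] at hz; linarith
  refine ⟨x₀, hKC hx₀K, mem_of_superset (inter_mem_nhdsWithin C (isOpen_ball.mem_nhds hx₀x))
    fun y hy => hmin ⟨ball_subset_closedBall hy.2, subset_closure hy.1⟩⟩

variable {n : ℕ}

theorem sub_notMem_tanCone_of_isLocalMinOn {C : Set (EuclideanSpace ℝ (Fin n))}
    {x₀ z : EuclideanSpace ℝ (Fin n)} (hmin : IsLocalMinOn (dist z) C x₀) (hz : z ≠ x₀) :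
    z - x₀ ∉ tanCone C x₀ := by
  intro hv
  obtain ⟨η, hη, hball⟩ := Metric.mem_nhdsWithin_iff.mp hmin
  have hd : 0 < ‖z - x₀‖ := norm_pos_iff.mpr (sub_ne_zero.mpr hz)
  set ε := min η (‖z - x₀‖ / 2)
  obtain ⟨y, hyC, r, hr, hyx₀, hrv⟩ := hv ε (lt_min hη (by positivity))
  have hinner : 2 * ⟪z - x₀, y - x₀⟫ ≤ ‖y - x₀‖ ^ 2 :=
    two_mul_inner_le_norm_sq_of_dist_le
      (hball ⟨mem_ball_iff_norm.mpr (hyx₀.trans_le (min_le_left _ _)), hyC⟩)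
  have hbound := norm_sq_sub_le_norm_smul_sub_sq hinner hr.le
  have hε : ε ≤ ‖z - x₀‖ / 2 := min_le_right _ _
  -- `hbound` and `hrv` give `‖z - x₀‖² < 5 ε² / 4`, which `hε` rules out.
  nlinarith [norm_nonneg (y - x₀), norm_nonneg (r • (y - x₀) - (z - x₀))]

theorem isOpen_of_tanCone_eq_univ {U C : Set (EuclideanSpace ℝ (Fin n))} (hCU : C ⊆ U)
    (hU : IsOpen U) (hC : U ∩ closure C ⊆ C) (htan : ∀ x ∈ C, tanCone C x = univ) :
    IsOpen C := by
  refine isOpen_iff_mem_nhds.mpr fun x hx => ?_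
  filter_upwards [exists_isLocalMinOn_dist_of_inter_closure_subset hU hC hx (hCU hx)]
    with z ⟨x₀, hx₀, hmin⟩
  by_contra hz
  exact sub_notMem_tanCone_of_isLocalMinOn hmin (ne_of_mem_of_not_mem hx₀ hz).symm
    (htan x₀ hx₀ ▸ mem_univ _)

theorem stmt_1 {n : ℕ} (U C : Set (EuclideanSpace ℝ (Fin n)))
    (hCU : C ⊆ U) (hU : IsOpen U) (hC : C = U ∩ closure C)
    (htan : ∀ x ∈ C, tanCone C x = Set.univ)
    (hne : C.Nonempty) (hconn : IsConnected U) :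
    C = U := by
  have hCopen : IsOpen C := isOpen_of_tanCone_eq_univ hCU hU hC.superset htan
  refine hCU.antisymm (hconn.isPreconnected.subset_of_closure_inter_subset hCopen ?_ ?_)
  · rwa [inter_eq_right.mpr hCU]
  · rw [inter_comm]
    exact hC.superset
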